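/- Completeness of the tableau calculus CC/TTt: for every finite set Γ of formulae and every formula A, if Γ ⊨_CC/TT A then Γ ⊢_CC/TTt A. -/
import Mathlib


inductive Formula : Type
  | var : Nat → Formula
  | neg : Formula → Formula
  | conj : Formula → Formula → Formula
  | impl : Formula → Formula → Formula
deriving DecidableEq

inductive TV : Type
  | zero
  | half
  | one
deriving DecidableEq

/-- Strong Kleene negation: 0↦1, ½↦½, 1↦0. -/
def tneg : TV → TV
  | .zero => .one
  | .half => .half
  | .one => .zero

/-- min on {0,½,1}. -/
def tmin : TV → TV → TV
  | .zero, _ => .zero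
  | .half, .zero => .zero
  | .half, .half => .half
  | .half, .one => .half
  | .one, b => b

/-- Designated values: ½ and 1. -/
def designated (x : TV) : Prop := x = TV.half ∨ x = TV.one

/-- The Cooper–Cantwell conditional table: f_CC(x,y) = y if x ∈ {½,1}, and ½ if x = 0. -/
def fCC : TV → TV → TV
  | .zero, _ => .half
  | .half, b => b
  | .one, b => b

/-- A CC-evaluation. -/
def IsCCEval (v : Formula → TV) : Prop :=
  (∀ A, v (.neg A) = tneg (v A)) ∧
  (∀ A B, v (.conj A B) = tmin (v A) (v B)) ∧
  (∀ A B, v (.impl A B) = fCC (v A) (v B))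

/-- TT-validity: Γ ⊨_CC/TT A. -/
def CCConsequence (Γ : Set Formula) (A : Formula) : Prop :=
  ∀ v : Formula → TV, IsCCEval v → (∀ B ∈ Γ, designated (v B)) → designated (v A)

/-- Signed formulae A : n. -/
abbrev SForm := Formula × TV

/-- The branch alternatives produced by applying the tableau rule to a signed formula:
each element of the list is one way of extending the current branch. -/
def ruleChildren : SForm → List (List SForm)
  | (.var _, _) => [[]]
  | (.neg A, .one) => [[(A, .zero)]]
  | (.neg A, .zero) => [[(A, .one)]]
  | (.neg A, .half) => [[(A, .half)]]
  | (.conj A B, .one) => [[(A, .one), (B, .one)]]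
  | (.conj A B, .zero) => [[(A, .zero)], [(B, .zero)]]
  | (.conj A B, .half) =>
      [[(A, .one), (B, .half)], [(A, .half), (B, .half)], [(A, .half), (B, .one)]]
  | (.impl A B, .one) => [[(A, .one), (B, .one)], [(A, .half), (B, .one)]]
  | (.impl A B, .zero) => [[(A, .one), (B, .zero)], [(A, .half), (B, .zero)]]
  | (.impl A B, .half) => [[(A, .zero)], [(B, .half)]]

/-- A set of signed formulae is saturated (completed) if every rule has been applied
exhaustively along it: for each signed formula, some branch alternative is included. -/
def Saturated (T : Set SForm) : Prop :=
  ∀ s ∈ T, ∃ c ∈ ruleChildren s, ∀ x ∈ c, x ∈ T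

/-- A branch is open if no formula occurs signed with two distinct values. -/
def OpenBranch (T : Set SForm) : Prop :=
  ∀ A m n, (A, m) ∈ T → (A, n) ∈ T → m = n

/-- `IsBranch S T`: T is (the set of signed formulae on) a branch of the completed
tableau with root S: it contains S, is saturated, and every signed formula on it
either belongs to the root or is introduced by a rule applied to a formula on it. -/
def IsBranch (S T : Set SForm) : Prop :=
  S ⊆ T ∧ Saturated T ∧ ∀ s ∈ T, s ∈ S ∨ ∃ t ∈ T, ∃ c ∈ ruleChildren t, s ∈ c

/-- The completed tableau with root S is closed iff all of its branches are closed. -/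
def TableauClosed (S : Set SForm) : Prop :=
  ∀ T, IsBranch S T → ¬ OpenBranch T

/-- The root labelled B : g B for each B ∈ Γ. -/
def rootSet (Γ : Finset Formula) (g : Formula → TV) : Set SForm :=
  {s | ∃ B ∈ Γ, s = (B, g B)}

/-- Tableau derivability: Γ ⊢ A iff for every assignment of designated values to the
members of Γ, the completed tableau with root Γ (so signed) together with A : 0
is closed. -/
def TabDeriv (Γ : Finset Formula) (A : Formula) : Prop :=
  ∀ g : Formula → TV, (∀ B ∈ Γ, designated (g B)) →
    TableauClosed (rootSet Γ g ∪ {(A, TV.zero)})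

/-- A quasi-evaluation: a functional set of signed formulae that is a proper subset
of (the graph of) some evaluation; in particular it is partial and non-total. -/
def IsQuasiCCEval (G : Set SForm) : Prop :=
  (∀ A m n, (A, m) ∈ G → (A, n) ∈ G → m = n) ∧
  ∃ v : Formula → TV, IsCCEval v ∧ (∀ p ∈ G, v p.1 = p.2) ∧ ∃ A, (A, v A) ∉ G

open Classical in
noncomputable def evalOf (T : Set SForm) : Formula → TV
  | .var p => if h : ∃ m, ((Formula.var p, m) : SForm) ∈ T then h.choose else .one
  | .neg A => tneg (evalOf T A)
  | .conj A B => tmin (evalOf T A) (evalOf T B)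
  | .impl A B => fCC (evalOf T A) (evalOf T B)

lemma evalOf_isCCEval (T : Set SForm) : IsCCEval (evalOf T) :=
  ⟨fun _ => rfl, fun _ _ => rfl, fun _ _ => rfl⟩

lemma branch_eval (T : Set SForm) (hopen : OpenBranch T) (hsat : Saturated T) :
    ∀ A m, (A, m) ∈ T → evalOf T A = m := by
  intro A
  induction A with
  | var p =>
    intro m hm
    have h : ∃ k, ((Formula.var p, k) : SForm) ∈ T := ⟨m, hm⟩
    simp only [evalOf, dif_pos h]
    exact hopen _ _ _ h.choose_spec hm
  | neg A ih =>
    intro m hm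
    obtain ⟨c, hc, hsub⟩ := hsat _ hm
    cases m with
    | zero =>
      simp only [ruleChildren, List.mem_singleton] at hc; subst hc
      have hA := ih TV.one (hsub (A, TV.one) (by simp))
      simp only [evalOf, hA]; rfl
    | half =>
      simp only [ruleChildren, List.mem_singleton] at hc; subst hc
      have hA := ih TV.half (hsub (A, TV.half) (by simp))
      simp only [evalOf, hA]; rfl
    | one =>
      simp only [ruleChildren, List.mem_singleton] at hc; subst hc
      have hA := ih TV.zero (hsub (A, TV.zero) (by simp))
      simp only [evalOf, hA]; rfl
  | conj A B ihA ihB =>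
    intro m hm
    obtain ⟨c, hc, hsub⟩ := hsat _ hm
    cases m with
    | zero =>
      simp only [ruleChildren, List.mem_cons, List.mem_singleton,
        List.not_mem_nil, or_false] at hc
      rcases hc with hc | hc <;> subst hc
      · have hA := ihA TV.zero (hsub (A, TV.zero) (by simp))
        simp only [evalOf, hA]; rfl
      · have hB := ihB TV.zero (hsub (B, TV.zero) (by simp))
        simp only [evalOf, hB]
        cases evalOf T A <;> rfl
    | half =>
      simp only [ruleChildren, List.mem_cons, List.mem_singleton,
        List.not_mem_nil, or_false] at hc
      rcases hc with hc | hc | hc <;> subst hc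
      · have hA := ihA TV.one (hsub (A, TV.one) (by simp))
        have hB := ihB TV.half (hsub (B, TV.half) (by simp))
        simp only [evalOf, hA, hB]; rfl
      · have hA := ihA TV.half (hsub (A, TV.half) (by simp))
        have hB := ihB TV.half (hsub (B, TV.half) (by simp))
        simp only [evalOf, hA, hB]; rfl
      · have hA := ihA TV.half (hsub (A, TV.half) (by simp))
        have hB := ihB TV.one (hsub (B, TV.one) (by simp))
        simp only [evalOf, hA, hB]; rfl
    | one =>
      simp only [ruleChildren, List.mem_singleton] at hc; subst hc
      have hA := ihA TV.one (hsub (A, TV.one) (by simp))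
      have hB := ihB TV.one (hsub (B, TV.one) (by simp))
      simp only [evalOf, hA, hB]; rfl
  | impl A B ihA ihB =>
    intro m hm
    obtain ⟨c, hc, hsub⟩ := hsat _ hm
    cases m with
    | zero =>
      simp only [ruleChildren, List.mem_cons, List.mem_singleton,
        List.not_mem_nil, or_false] at hc
      rcases hc with hc | hc <;> subst hc
      · have hA := ihA TV.one (hsub (A, TV.one) (by simp))
        have hB := ihB TV.zero (hsub (B, TV.zero) (by simp))
        simp only [evalOf, hA, hB]; rfl
      · have hA := ihA TV.half (hsub (A, TV.half) (by simp))
        have hB := ihB TV.zero (hsub (B, TV.zero) (by simp))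
        simp only [evalOf, hA, hB]; rfl
    | half =>
      simp only [ruleChildren, List.mem_cons, List.mem_singleton,
        List.not_mem_nil, or_false] at hc
      rcases hc with hc | hc <;> subst hc
      · have hA := ihA TV.zero (hsub (A, TV.zero) (by simp))
        simp only [evalOf, hA]; rfl
      · have hB := ihB TV.half (hsub (B, TV.half) (by simp))
        simp only [evalOf, hB]
        cases evalOf T A <;> rfl
    | one =>
      simp only [ruleChildren, List.mem_cons, List.mem_singleton,
        List.not_mem_nil, or_false] at hc
      rcases hc with hc | hc <;> subst hc
      · have hA := ihA TV.one (hsub (A, TV.one) (by simp))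
        have hB := ihB TV.one (hsub (B, TV.one) (by simp))
        simp only [evalOf, hA, hB]; rfl
      · have hA := ihA TV.half (hsub (A, TV.half) (by simp))
        have hB := ihB TV.one (hsub (B, TV.one) (by simp))
        simp only [evalOf, hA, hB]; rfl

/-- Completeness of the tableau calculus CC/TTt: for every finite set Γ of formulae
and every formula A, if Γ ⊨_CC/TT A then Γ ⊢_CC/TTt A. -/
theorem ccttt_completeness (Γ : Finset Formula) (A : Formula) :
    CCConsequence (↑Γ) A → TabDeriv Γ A := by
  intro hval g hg T hT hopen
  obtain ⟨hroot, hsat, _⟩ := hT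
  have hev := branch_eval T hopen hsat
  have hdes : ∀ B ∈ (↑Γ : Set Formula), designated (evalOf T B) := by
    intro B hB
    have hmem : ((B, g B) : SForm) ∈ T := hroot (Or.inl ⟨B, hB, rfl⟩)
    rw [hev _ _ hmem]
    exact hg B hB
  have hA0 : ((A, TV.zero) : SForm) ∈ T := hroot (Or.inr rfl)
  have := hval (evalOf T) (evalOf_isCCEval T) hdes
  rw [hev _ _ hA0] at this
  rcases this with h | h <;> exact TV.noConfusion h
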